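/- Let $W \in \mathbb{R}^{h \times n}$, $G \in \mathbb{R}^{h \times b}$, $X \in \mathbb{R}^{n \times b}$, and $Y \in \mathbb{R}^{b \times b}$ be real matrices, and set $P = X^{\top} Y \in \mathbb{R}^{b \times b}$. Suppose there is a real number $s > 0$ such that $s \, \lVert v \rVert_2 \le \lVert P^{\top} v \rVert_2$ for every vector $v \in \mathbb{R}^{b}$ (i.e., $s$ is a lower bound on the smallest singular value of $P$). Then the Frobenius norms satisfy $\lVert W^{\top} G \rVert_F \le \frac{\lVert W \rVert_F \, \lVert Y \rVert_F}{s} \, \lVert G X^{\top} \rVert_F$. (This is the matrix inequality underlying the paper's Lemma: for a network whose first layer computes $W X$ on a mini-batch $X$ with upstream gradient $G$, the input gradient $\nabla_X \ell = W^{\top} G$ is bounded in Frobenius norm by $k_g$ times the first-layer weight gradient $\nabla_W \ell = G X^{\top}$, where $k_g = \lVert W \rVert_F \lVert Y \rVert_F / s$ and $Y$ plays the role of the pseudo-inverse $(X^{\top})^{+}$.) -/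

import Mathlib

open Matrix

/-- The Frobenius norm of a real matrix. -/
noncomputable def frobeniusNorm {m n : ℕ} (M : Matrix (Fin m) (Fin n) ℝ) : ℝ :=
  Real.sqrt (∑ i, ∑ j, (M i j) ^ 2)

/-- The Euclidean norm of a real vector. -/
noncomputable def euclNorm {m : ℕ} (v : Fin m → ℝ) : ℝ :=
  Real.sqrt (∑ i, (v i) ^ 2)

/-!
Since `s` bounds the singular values of `Pᵀ` from below, right multiplication by `P`
shrinks each row of `G`, hence `G` itself, by at most the factor `s`:
`s ‖G‖_F ≤ ‖G P‖_F = ‖(G Xᵀ) Y‖_F ≤ ‖G Xᵀ‖_F ‖Y‖_F`.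
Submultiplicativity then gives `‖Wᵀ G‖_F ≤ ‖W‖_F ‖G‖_F ≤ ‖W‖_F ‖Y‖_F ‖G Xᵀ‖_F / s`.
-/

open scoped Matrix.Norms.Frobenius

lemma frobeniusNorm_eq_norm {m n : ℕ} (M : Matrix (Fin m) (Fin n) ℝ) :
    frobeniusNorm M = ‖M‖ := by
  simp only [frobenius_norm_def, frobeniusNorm, Real.sqrt_eq_rpow, Real.norm_eq_abs,
    Real.rpow_two, sq_abs]

lemma frobeniusNorm_nonneg {m n : ℕ} (M : Matrix (Fin m) (Fin n) ℝ) :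
    0 ≤ frobeniusNorm M :=
  Real.sqrt_nonneg _

lemma frobeniusNorm_transpose {m n : ℕ} (M : Matrix (Fin m) (Fin n) ℝ) :
    frobeniusNorm Mᵀ = frobeniusNorm M := by
  simp only [frobeniusNorm_eq_norm, frobenius_norm_transpose]

lemma frobeniusNorm_mul_le {l m n : ℕ} (A : Matrix (Fin l) (Fin m) ℝ)
    (B : Matrix (Fin m) (Fin n) ℝ) :
    frobeniusNorm (A * B) ≤ frobeniusNorm A * frobeniusNorm B := by
  simp only [frobeniusNorm_eq_norm]
  exact frobenius_norm_mul A B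

lemma frobeniusNorm_eq_sqrt_sum_euclNorm_row_sq {m n : ℕ} (M : Matrix (Fin m) (Fin n) ℝ) :
    frobeniusNorm M = Real.sqrt (∑ i, euclNorm (M i) ^ 2) := by
  simp only [frobeniusNorm, euclNorm,
    Real.sq_sqrt (Finset.sum_nonneg fun _ _ => sq_nonneg _)]

lemma mul_frobeniusNorm_le_frobeniusNorm_mul {l m n : ℕ} (G : Matrix (Fin l) (Fin m) ℝ)
    (P : Matrix (Fin m) (Fin n) ℝ) {s : ℝ} (hs : 0 ≤ s)
    (hP : ∀ v : Fin m → ℝ, s * euclNorm v ≤ euclNorm (Pᵀ *ᵥ v)) :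
    s * frobeniusNorm G ≤ frobeniusNorm (G * P) := by
  rw [frobeniusNorm_eq_sqrt_sum_euclNorm_row_sq, frobeniusNorm_eq_sqrt_sum_euclNorm_row_sq,
    ← Real.sqrt_sq hs, ← Real.sqrt_mul (sq_nonneg s), Finset.mul_sum]
  gcongr with i
  rw [← mul_pow, mul_apply_eq_vecMul, ← mulVec_transpose]
  exact pow_le_pow_left₀ (mul_nonneg hs (Real.sqrt_nonneg _)) (hP (G i)) 2

/-- If `s > 0` is a lower bound on the smallest singular value of
`P = Xᵀ Y` (i.e. `s ‖v‖₂ ≤ ‖Pᵀ v‖₂` for all `v`), then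
`‖Wᵀ G‖_F ≤ (‖W‖_F ‖Y‖_F / s) ‖G Xᵀ‖_F`. -/
theorem stmt_0 {h n b : ℕ}
    (W : Matrix (Fin h) (Fin n) ℝ) (G : Matrix (Fin h) (Fin b) ℝ)
    (X : Matrix (Fin n) (Fin b) ℝ) (Y : Matrix (Fin n) (Fin b) ℝ)
    (P : Matrix (Fin b) (Fin b) ℝ) (hP : P = Xᵀ * Y)
    (s : ℝ) (hs : 0 < s)
    (hsing : ∀ v : Fin b → ℝ, s * euclNorm v ≤ euclNorm (Pᵀ.mulVec v)) :
    frobeniusNorm (Wᵀ * G) ≤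
      (frobeniusNorm W * frobeniusNorm Y / s) * frobeniusNorm (G * Xᵀ) := by
  have hG : frobeniusNorm G ≤ frobeniusNorm (G * Xᵀ) * frobeniusNorm Y / s := by
    rw [le_div_iff₀ hs, mul_comm]
    calc s * frobeniusNorm G ≤ frobeniusNorm (G * P) :=
          mul_frobeniusNorm_le_frobeniusNorm_mul G P hs.le hsing
      _ = frobeniusNorm (G * Xᵀ * Y) := by rw [hP, Matrix.mul_assoc]
      _ ≤ frobeniusNorm (G * Xᵀ) * frobeniusNorm Y := frobeniusNorm_mul_le _ _
  calc frobeniusNorm (Wᵀ * G) ≤ frobeniusNorm W * frobeniusNorm G := by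
        simpa only [frobeniusNorm_transpose] using frobeniusNorm_mul_le Wᵀ G
    _ ≤ frobeniusNorm W * (frobeniusNorm (G * Xᵀ) * frobeniusNorm Y / s) := by
        gcongr
        exact frobeniusNorm_nonneg W
    _ = (frobeniusNorm W * frobeniusNorm Y / s) * frobeniusNorm (G * Xᵀ) := by ring
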